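/- arXiv:2605.13589 — 4 statements merged into one kernel-verified Lean document; each statement's English description precedes it below -/
import Mathlib

section
/- Let 𝒮 = I₁ × ⋯ × I_d ⊆ ℝᵈ be a product of nonempty open intervals and let f : 𝒮 → ℝᵈ be a C² diffeomorphism onto its image such that the Jacobian Df(s) is lower triangular and invertible at every s (i.e. the j-th component f_j depends only on s₁,…,s_j). Fix i ∈ {1,…,d} and assume additionally that for every j ≠ i the component f_j does not depend on sᵢ (node i is a sink). For e = 0, 1, 2 let μᵉ = μ₁ᵉ ⊗ ⋯ ⊗ μ_dᵉ be product probability measures whose coordinates have strictly positive C¹ densities p_jᵉ on I_j, and let qᵉ(x) := (∏_j p_jᵉ((f⁻¹(x))_j)) · |det D(f⁻¹)(x)| denote the density of the pushforward f_*μᵉ. Define Δ(0,e,x) := ∇(log q⁰(x) − log qᵉ(x)). Then: (a) for every s ∈ 𝒮, Δ(0,e,f(s))ᵢ = ∂_{xᵢ}(f⁻¹)ᵢ(f(s)) · (d/dsᵢ)(log pᵢ⁰ − log pᵢᵉ)(sᵢ); (b) if moreover (d/dsᵢ)(log pᵢ⁰ − log pᵢ²)(sᵢ) ≠ 0 for all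 sᵢ ∈ Iᵢ, then the ratio Rᵢ(x) := Δ(0,1,x)ᵢ / Δ(0,2,x)ᵢ satisfies Rᵢ(f(s)) = (d/dsᵢ)(log pᵢ⁰ − log pᵢ¹)(sᵢ) / (d/dsᵢ)(log pᵢ⁰ − log pᵢ²)(sᵢ), a function of sᵢ alone, and consequently, for S ~ μ⁰ and X = f(S), the random variable Rᵢ(X) is independent of the vector (X_j)_{j≠i}. -/
open MeasureTheory

/-- Sink direction of the sink-identification proposition: for a sink
node `i` of a triangular C² diffeomorphic mixing `f`, the `i`-th score difference
`Δ(0,e,f(s))ᵢ` reduces to `∂_{xᵢ}(f⁻¹)ᵢ(f(s)) · (log pᵢ⁰ − log pᵢᵉ)'(sᵢ)`; consequently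
the score ratio `Rᵢ ∘ f` is a function of `sᵢ` alone and `Rᵢ(X)` is independent of
`(X_j)_{j ≠ i}` under the base environment `μ⁰`. -/
theorem sink_score_ratio_independent
    (d : ℕ)
    (I : Fin d → Set ℝ)
    (hIopen : ∀ j, IsOpen (I j)) (hIne : ∀ j, (I j).Nonempty)
    (hIinterval : ∀ j, (I j).OrdConnected)
    (S : Set (Fin d → ℝ)) (hS : S = Set.pi Set.univ I)
    (f g : (Fin d → ℝ) → (Fin d → ℝ))
    (hfC2 : ContDiffOn ℝ 2 f S)
    (hgC2 : ContDiffOn ℝ 2 g (f '' S))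
    (himage_open : IsOpen (f '' S))
    (hgf : ∀ s ∈ S, g (f s) = s)
    (hfg : ∀ x ∈ f '' S, f (g x) = x)
    (htri : ∀ s ∈ S, ∀ i' j : Fin d, i' < j → fderiv ℝ f s (Pi.single j 1) i' = 0)
    (hdiag : ∀ s ∈ S, ∀ j : Fin d, fderiv ℝ f s (Pi.single j 1) j ≠ 0)
    (i : Fin d)
    (hsink : ∀ s ∈ S, ∀ j : Fin d, j ≠ i → fderiv ℝ f s (Pi.single i 1) j = 0)
    (p : Fin d → Fin 3 → ℝ → ℝ)
    (hpC1 : ∀ j e, ContDiffOn ℝ 1 (p j e) (I j))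
    (hppos : ∀ j e, ∀ x ∈ I j, 0 < p j e x)
    (μ : Fin 3 → Fin d → Measure ℝ)
    (hprob : ∀ e j, IsProbabilityMeasure (μ e j))
    (hdens : ∀ e j, μ e j =
      volume.withDensity fun x => ENNReal.ofReal ((I j).indicator (p j e) x))
    (q : Fin 3 → (Fin d → ℝ) → ℝ)
    (hq : ∀ e x, q e x = (∏ j, p j e (g x j)) *
      |(Matrix.of fun i' j : Fin d => fderiv ℝ g x (Pi.single j 1) i').det|)
    (Δ : Fin 3 → (Fin d → ℝ) → Fin d → ℝ)
    (hΔ : ∀ e x i', Δ e x i' =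
      fderiv ℝ (fun y => Real.log (q 0 y) - Real.log (q e y)) x (Pi.single i' 1)) :
    -- (a) the score difference at a sink node is the diagonal Jacobian entry times
    -- the one-dimensional log-density score difference of the sink source
    (∀ e : Fin 3, ∀ s ∈ S, Δ e (f s) i =
      fderiv ℝ g (f s) (Pi.single i 1) i *
        deriv (fun t => Real.log (p i 0 t) - Real.log (p i e t)) (s i))
    ∧
    -- (b) under non-vanishing of the denominator, the score ratio is a function of the
    -- sink source alone, and is independent of the non-sink observed variables
    ((∀ x ∈ I i, deriv (fun t => Real.log (p i 0 t) - Real.log (p i 2 t)) x ≠ 0) →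
      ∀ R : (Fin d → ℝ) → ℝ, (∀ x, R x = Δ 1 x i / Δ 2 x i) →
        (∀ s ∈ S, R (f s) =
          deriv (fun t => Real.log (p i 0 t) - Real.log (p i 1 t)) (s i) /
          deriv (fun t => Real.log (p i 0 t) - Real.log (p i 2 t)) (s i))
        ∧
        Measure.map (fun s => (R (f s), fun j : {j : Fin d // j ≠ i} => f s j.1))
            (Measure.pi (μ 0))
          = (Measure.map (fun s => R (f s)) (Measure.pi (μ 0))).prod
              (Measure.map (fun s => fun j : {j : Fin d // j ≠ i} => f s j.1)
                (Measure.pi (μ 0)))) := by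
  classical
  have hSopen : IsOpen S := by
    rw [hS]; exact isOpen_set_pi Set.finite_univ (fun j _ => hIopen j)
  have hmemI : ∀ s ∈ S, ∀ j, s j ∈ I j := by
    intro s hs j; rw [hS] at hs; exact hs j (Set.mem_univ j)
  have hfdiff : ∀ s ∈ S, DifferentiableAt ℝ f s := fun s hs =>
    (hfC2.differentiableOn (by norm_num)).differentiableAt (hSopen.mem_nhds hs)
  have hgdiff : ∀ x ∈ f '' S, DifferentiableAt ℝ g x := fun x hx =>
    (hgC2.differentiableOn (by norm_num)).differentiableAt (himage_open.mem_nhds hx)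
  have hgmem : ∀ x ∈ f '' S, g x ∈ S := by
    rintro x ⟨s, hs, rfl⟩; rw [hgf s hs]; exact hs
  -- two-sided inverse derivative identities
  have hBA : ∀ s ∈ S, (fderiv ℝ g (f s)).comp (fderiv ℝ f s)
      = ContinuousLinearMap.id ℝ (Fin d → ℝ) := by
    intro s hs
    have h1 : g ∘ f =ᶠ[nhds s] id :=
      Filter.eventuallyEq_of_mem (hSopen.mem_nhds hs) hgf
    have h2 := h1.fderiv_eq (𝕜 := ℝ)
    rw [fderiv_comp s (hgdiff _ (Set.mem_image_of_mem f hs)) (hfdiff s hs), fderiv_id] at h2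
    exact h2
  have hAB : ∀ x ∈ f '' S, (fderiv ℝ f (g x)).comp (fderiv ℝ g x)
      = ContinuousLinearMap.id ℝ (Fin d → ℝ) := by
    intro x hx
    have h1 : f ∘ g =ᶠ[nhds x] id :=
      Filter.eventuallyEq_of_mem (himage_open.mem_nhds hx) hfg
    have h2 := h1.fderiv_eq (𝕜 := ℝ)
    rw [fderiv_comp x (hfdiff _ (hgmem x hx)) (hgdiff x hx), fderiv_id] at h2
    exact h2
  -- determinant of Jacobian of g is nonzero on the image
  have hmat : ∀ (L : (Fin d → ℝ) →L[ℝ] (Fin d → ℝ)),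
      (Matrix.of fun i' j : Fin d => L (Pi.single j 1) i')
        = LinearMap.toMatrix' (L : (Fin d → ℝ) →ₗ[ℝ] (Fin d → ℝ)) := by
    intro L; ext i' j
    rw [LinearMap.toMatrix'_apply]
    simp only [Matrix.of_apply, ContinuousLinearMap.coe_coe]
  have hdet : ∀ x ∈ f '' S,
      (Matrix.of fun i' j : Fin d => fderiv ℝ g x (Pi.single j 1) i').det ≠ 0 := by
    intro x hx
    have hcomp : (LinearMap.toMatrix'
          ((fderiv ℝ f (g x) : (Fin d → ℝ) →L[ℝ] (Fin d → ℝ)) :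
            (Fin d → ℝ) →ₗ[ℝ] (Fin d → ℝ))) *
        (LinearMap.toMatrix'
          ((fderiv ℝ g x : (Fin d → ℝ) →L[ℝ] (Fin d → ℝ)) :
            (Fin d → ℝ) →ₗ[ℝ] (Fin d → ℝ))) = 1 := by
      rw [← LinearMap.toMatrix'_comp, ← ContinuousLinearMap.toLinearMap_comp, hAB x hx]
      simpa using LinearMap.toMatrix'_id (n := Fin d) (R := ℝ)
    have h1 := congrArg Matrix.det hcomp
    rw [Matrix.det_mul, Matrix.det_one] at h1
    rw [hmat]
    intro h0
    rw [h0, mul_zero] at h1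
    exact zero_ne_one h1
  -- positivity of pushforward densities on the image
  have hqpos : ∀ (e : Fin 3), ∀ x ∈ f '' S, 0 < q e x := by
    intro e x hx
    rw [hq]
    exact mul_pos (Finset.prod_pos fun j _ => hppos j e _ (hmemI _ (hgmem x hx) j))
      (abs_pos.mpr (hdet x hx))
  -- log-density difference as a sum of coordinatewise terms
  have heq : ∀ (e : Fin 3), ∀ y ∈ f '' S,
      Real.log (q 0 y) - Real.log (q e y)
        = ∑ j, (Real.log (p j 0 (g y j)) - Real.log (p j e (g y j))) := by
    intro e y hy
    have hgy := hgmem y hy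
    have hprodne : ∀ e' : Fin 3, (∏ j, p j e' (g y j)) ≠ 0 := fun e' =>
      (Finset.prod_pos fun j _ => hppos j e' _ (hmemI _ hgy j)).ne'
    have hdne : |(Matrix.of fun i' j : Fin d => fderiv ℝ g y (Pi.single j 1) i').det| ≠ 0 :=
      abs_ne_zero.mpr (hdet y hy)
    rw [hq 0 y, hq e y, Real.log_mul (hprodne 0) hdne, Real.log_mul (hprodne e) hdne,
      Real.log_prod (fun j _ => (hppos j 0 _ (hmemI _ hgy j)).ne'),
      Real.log_prod (fun j _ => (hppos j e _ (hmemI _ hgy j)).ne'),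
      Finset.sum_sub_distrib]
    ring
  -- structure of the i-th column of the Jacobians
  have hBei : ∀ s ∈ S, fderiv ℝ g (f s) (Pi.single i 1)
      = (fderiv ℝ f s (Pi.single i 1) i)⁻¹ • (Pi.single i 1 : Fin d → ℝ) := by
    intro s hs
    have hcol : fderiv ℝ f s (Pi.single i 1)
        = (fderiv ℝ f s (Pi.single i 1) i) • (Pi.single i 1 : Fin d → ℝ) := by
      funext j
      rcases eq_or_ne j i with rfl | hj
      · simp
      · rw [hsink s hs j hj]; simp [Pi.single_eq_of_ne hj]
    have h1 : fderiv ℝ g (f s) (fderiv ℝ f s (Pi.single i 1)) = Pi.single i 1 := by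
      have h2 := congrArg
        (fun L : (Fin d → ℝ) →L[ℝ] (Fin d → ℝ) => L (Pi.single i 1)) (hBA s hs)
      simpa using h2
    rw [hcol, _root_.map_smul] at h1
    have hne := hdiag s hs i
    calc fderiv ℝ g (f s) (Pi.single i 1)
        = (fderiv ℝ f s (Pi.single i 1) i)⁻¹ •
            ((fderiv ℝ f s (Pi.single i 1) i) • fderiv ℝ g (f s) (Pi.single i 1)) := by
          rw [smul_smul, inv_mul_cancel₀ hne, one_smul]
      _ = (fderiv ℝ f s (Pi.single i 1) i)⁻¹ • (Pi.single i 1 : Fin d → ℝ) := by rw [h1]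
  have hBne : ∀ s ∈ S, fderiv ℝ g (f s) (Pi.single i 1) i ≠ 0 := by
    intro s hs
    rw [hBei s hs]
    simpa using inv_ne_zero (hdiag s hs i)
  -- one-dimensional log-density derivatives
  have hpd : ∀ s ∈ S, ∀ (j : Fin d) (e' : Fin 3),
      HasDerivAt (fun t => Real.log (p j e' t))
        (deriv (fun t => Real.log (p j e' t)) (s j)) (s j) := by
    intro s hs j e'
    have h1 : DifferentiableAt ℝ (p j e') (s j) :=
      ((hpC1 j e').differentiableOn one_ne_zero).differentiableAt
        ((hIopen j).mem_nhds (hmemI s hs j))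
    exact (h1.log (hppos j e' _ (hmemI s hs j)).ne').hasDerivAt
  -- Part (a)
  have parta : ∀ e : Fin 3, ∀ s ∈ S, Δ e (f s) i =
      fderiv ℝ g (f s) (Pi.single i 1) i *
        deriv (fun t => Real.log (p i 0 t) - Real.log (p i e t)) (s i) := by
    intro e s hs
    have hx : f s ∈ f '' S := Set.mem_image_of_mem f hs
    have hgx : g (f s) = s := hgf s hs
    have hgF : HasFDerivAt g (fderiv ℝ g (f s)) (f s) := (hgdiff _ hx).hasFDerivAt
    have hproj : ∀ j : Fin d, HasFDerivAt (fun y : Fin d → ℝ => g y j)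
        ((ContinuousLinearMap.proj (R := ℝ) (φ := fun _ : Fin d => ℝ) j).comp
          (fderiv ℝ g (f s))) (f s) := fun j =>
      (ContinuousLinearMap.proj (R := ℝ) (φ := fun _ : Fin d => ℝ) j).hasFDerivAt.comp
        (f s) hgF
    have hterm : ∀ j : Fin d, HasFDerivAt
        (fun y => Real.log (p j 0 (g y j)) - Real.log (p j e (g y j)))
        ((deriv (fun t => Real.log (p j 0 t)) (s j)
            - deriv (fun t => Real.log (p j e t)) (s j)) •
          ((ContinuousLinearMap.proj (R := ℝ) (φ := fun _ : Fin d => ℝ) j).comp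
            (fderiv ℝ g (f s)))) (f s) := by
      intro j
      have h0 : HasFDerivAt (fun y : Fin d → ℝ => Real.log (p j 0 (g y j)))
          ((deriv (fun t => Real.log (p j 0 t)) (s j)) •
            ((ContinuousLinearMap.proj (R := ℝ) (φ := fun _ : Fin d => ℝ) j).comp
              (fderiv ℝ g (f s)))) (f s) :=
        (hpd s hs j 0).comp_hasFDerivAt_of_eq (f s) (hproj j) (by rw [hgx])
      have he : HasFDerivAt (fun y : Fin d → ℝ => Real.log (p j e (g y j)))
          ((deriv (fun t => Real.log (p j e t)) (s j)) •
            ((ContinuousLinearMap.proj (R := ℝ) (φ := fun _ : Fin d => ℝ) j).comp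
              (fderiv ℝ g (f s)))) (f s) :=
        (hpd s hs j e).comp_hasFDerivAt_of_eq (f s) (hproj j) (by rw [hgx])
      have h2 := h0.sub he
      rwa [← sub_smul] at h2
    have hsum : HasFDerivAt
        (fun y => ∑ j, (Real.log (p j 0 (g y j)) - Real.log (p j e (g y j))))
        (∑ j, (deriv (fun t => Real.log (p j 0 t)) (s j)
            - deriv (fun t => Real.log (p j e t)) (s j)) •
          ((ContinuousLinearMap.proj (R := ℝ) (φ := fun _ : Fin d => ℝ) j).comp
            (fderiv ℝ g (f s)))) (f s) :=
      HasFDerivAt.fun_sum fun j _ => hterm j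
    have hev : (fun y => Real.log (q 0 y) - Real.log (q e y)) =ᶠ[nhds (f s)]
        (fun y => ∑ j, (Real.log (p j 0 (g y j)) - Real.log (p j e (g y j)))) :=
      Filter.eventuallyEq_of_mem (himage_open.mem_nhds hx) (heq e)
    rw [hΔ, hev.fderiv_eq, hsum.fderiv]
    simp only [ContinuousLinearMap.coe_sum', Finset.sum_apply,
      ContinuousLinearMap.smul_apply, ContinuousLinearMap.comp_apply,
      ContinuousLinearMap.proj_apply, smul_eq_mul]
    rw [Finset.sum_eq_single i]
    · rw [deriv_fun_sub (hpd s hs i 0).differentiableAt (hpd s hs i e).differentiableAt]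
      ring
    · intro b _ hb
      rw [hBei s hs]
      simp [Pi.single_eq_of_ne hb]
    · simp
  refine ⟨parta, ?_⟩
  intro hnz R hR
  have partb1 : ∀ s ∈ S, R (f s) =
      deriv (fun t => Real.log (p i 0 t) - Real.log (p i 1 t)) (s i) /
        deriv (fun t => Real.log (p i 0 t) - Real.log (p i 2 t)) (s i) := by
    intro s hs
    rw [hR, parta 1 s hs, parta 2 s hs, mul_div_mul_left _ _ (hBne s hs)]
  refine ⟨partb1, ?_⟩
  -- measure-theoretic part
  haveI hP : ∀ j, IsProbabilityMeasure (μ 0 j) := hprob 0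
  have hIj : ∀ j, μ 0 j (I j) = 1 := by
    intro j
    have hco : μ 0 j ((I j)ᶜ) = 0 := by
      rw [hdens 0 j, withDensity_apply _ (hIopen j).measurableSet.compl]
      have hz : ∀ᵐ x ∂(volume.restrict (I j)ᶜ),
          ENNReal.ofReal ((I j).indicator (p j 0) x) = (0 : ENNReal) := by
        refine (ae_restrict_iff' (hIopen j).measurableSet.compl).mpr
          (Filter.Eventually.of_forall fun x hx => ?_)
        rw [Set.indicator_of_notMem hx]
        simp
      rw [lintegral_congr_ae hz, lintegral_zero]
    have h1 := measure_add_measure_compl (μ := μ 0 j) (hIopen j).measurableSet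
    rw [hco, add_zero, measure_univ] at h1
    exact h1
  have hπS : Measure.pi (μ 0) S = 1 := by
    rw [hS, Measure.pi_pi]
    simp [hIj]
  have hπSc : ∀ᵐ s ∂(Measure.pi (μ 0)), s ∈ S := by
    have h0 : Measure.pi (μ 0) Sᶜ = 0 := by
      rw [measure_compl hSopen.measurableSet (measure_ne_top _ _), hπS, measure_univ]
      simp
    filter_upwards [measure_eq_zero_iff_ae_notMem.mp h0] with s hs
    simpa using hs
  obtain ⟨c, hc⟩ := hIne i
  have hupdmem : ∀ s ∈ S, ∀ t ∈ I i, Function.update s i t ∈ S := by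
    intro s hs t ht
    rw [hS]
    intro j _
    rcases eq_or_ne j i with rfl | hj
    · simpa using ht
    · rw [Function.update_of_ne hj]; exact hmemI s hs j
  have hconst : ∀ s ∈ S, ∀ j, j ≠ i → f (Function.update s i c) j = f s j := by
    intro s hs j hj
    have hconv : Convex ℝ (I i) := convex_iff_ordConnected.mpr (hIinterval i)
    have hder : ∀ t ∈ I i, HasDerivAt (fun t => f (Function.update s i t) j) 0 t := by
      intro t ht
      have hupd : HasDerivAt (fun t : ℝ => Function.update s i t)
          (Pi.single i 1 : Fin d → ℝ) t := by
        have hfun : (fun t : ℝ => Function.update s i t)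
            = fun t : ℝ => s + (t - s i) • (Pi.single i 1 : Fin d → ℝ) := by
          funext t j'
          rcases eq_or_ne j' i with rfl | hj'
          · simp
          · simp [Function.update_of_ne hj', Pi.single_eq_of_ne hj']
        rw [hfun]
        simpa using (((hasDerivAt_id t).sub_const (s i)).smul_const
          (Pi.single i 1 : Fin d → ℝ)).const_add s
      have hmem := hupdmem s hs t ht
      have hF : HasDerivAt (fun t : ℝ => f (Function.update s i t))
          (fderiv ℝ f (Function.update s i t) (Pi.single i 1)) t :=
        (hfdiff _ hmem).hasFDerivAt.comp_hasDerivAt t hupd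
      have hj' : HasDerivAt (fun t : ℝ => f (Function.update s i t) j)
          (fderiv ℝ f (Function.update s i t) (Pi.single i 1) j) t :=
        (ContinuousLinearMap.proj (R := ℝ) (φ := fun _ : Fin d => ℝ) j).hasFDerivAt.comp_hasDerivAt
          t hF
      rw [hsink _ hmem j hj] at hj'
      exact hj'
    have hdiffOn : DifferentiableOn ℝ (fun t => f (Function.update s i t) j) (I i) :=
      fun t ht => (hder t ht).differentiableAt.differentiableWithinAt
    have hzero : ∀ t ∈ I i,
        fderivWithin ℝ (fun t => f (Function.update s i t) j) (I i) t = 0 := by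
      intro t ht
      rw [fderivWithin_of_isOpen (hIopen i) ht, (hder t ht).hasFDerivAt.fderiv]
      ext u
      simp
    have h1 := hconv.is_const_of_fderivWithin_eq_zero hdiffOn hzero hc (hmemI s hs i)
    simpa [Function.update_eq_self] using h1
  -- measurable factorizations
  set φ : ℝ → ℝ := fun t => deriv (fun u => Real.log (p i 0 u) - Real.log (p i 1 u)) t /
      deriv (fun u => Real.log (p i 0 u) - Real.log (p i 2 u)) t with hφ
  have hφm : Measurable φ := (measurable_deriv _).div (measurable_deriv _)
  set F : (Fin d → ℝ) → (Fin d → ℝ) := S.piecewise f (fun _ => 0) with hF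
  have hFm : Measurable F := by
    apply measurable_of_restrict_of_restrict_compl hSopen.measurableSet
    · have h1 : S.restrict F = S.restrict f := by
        funext x
        show F x.1 = f x.1
        rw [hF]
        exact Set.piecewise_eq_of_mem _ _ _ x.2
      rw [show S.domRestrict F = S.restrict f from h1]
      exact hfC2.continuousOn.restrict.measurable
    · have h1 : Sᶜ.restrict F = fun _ => (0 : Fin d → ℝ) := by
        funext x
        show F x.1 = 0
        rw [hF]
        exact Set.piecewise_eq_of_notMem _ _ _ x.2
      rw [show Sᶜ.domRestrict F = fun _ => (0 : Fin d → ℝ) from h1]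
      exact measurable_const
  set emb : ({j : Fin d // j ≠ i} → ℝ) → (Fin d → ℝ) :=
    fun u j' => if h : j' = i then c else u ⟨j', h⟩ with hembdef
  have hembm : Measurable emb := by
    apply measurable_pi_lambda
    intro j'
    by_cases h : j' = i
    · simpa [hembdef, h] using (measurable_const : Measurable fun _ : {j : Fin d // j ≠ i} → ℝ => c)
    · simpa [hembdef, h] using measurable_pi_apply (⟨j', h⟩ : {j : Fin d // j ≠ i})
  set ψ : ({j : Fin d // j ≠ i} → ℝ) → ({j : Fin d // j ≠ i} → ℝ) :=
    fun u j => F (emb u) j.1 with hψdef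
  have hψm : Measurable ψ :=
    measurable_pi_lambda _ fun j => (measurable_pi_apply j.1).comp (hFm.comp hembm)
  have hembupd : ∀ s : Fin d → ℝ,
      emb (fun j : {j : Fin d // j ≠ i} => s j.1) = Function.update s i c := by
    intro s
    funext j'
    rcases eq_or_ne j' i with rfl | h
    · simp [hembdef]
    · simp [hembdef, h, Function.update_of_ne h]
  -- a.e. identifications
  have hXae : (fun s => R (f s)) =ᵐ[Measure.pi (μ 0)] fun s => φ (s i) := by
    filter_upwards [hπSc] with s hs
    rw [partb1 s hs]
  have hYae : (fun s => fun j : {j : Fin d // j ≠ i} => f s j.1)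
      =ᵐ[Measure.pi (μ 0)] fun s => ψ (fun j : {j : Fin d // j ≠ i} => s j.1) := by
    filter_upwards [hπSc] with s hs
    funext j
    have h1 : Function.update s i c ∈ S := hupdmem s hs c hc
    show f s j.1 = F (emb fun j : {j : Fin d // j ≠ i} => s j.1) j.1
    rw [hembupd s, hF, Set.piecewise_eq_of_mem _ _ _ h1]
    exact (hconst s hs j.1 j.2).symm
  have hpair : (fun s => (R (f s), fun j : {j : Fin d // j ≠ i} => f s j.1))
      =ᵐ[Measure.pi (μ 0)]
        fun s => (φ (s i), ψ (fun j : {j : Fin d // j ≠ i} => s j.1)) := by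
    filter_upwards [hXae, hYae] with s h1 h2
    rw [h1, h2]
  rw [Measure.map_congr hpair, Measure.map_congr hXae, Measure.map_congr hYae]
  -- product structure
  haveI : ∀ j : {j : Fin d // j ≠ i}, IsProbabilityMeasure (μ 0 j.1) := fun j => hP j.1
  haveI : ∀ j : {j : Fin d // ¬ j ≠ i}, IsProbabilityMeasure (μ 0 j.1) := fun j => hP j.1
  have hmp := measurePreserving_piEquivPiSubtypeProd (μ 0) (fun j : Fin d => j ≠ i)
  set e' := MeasurableEquiv.piEquivPiSubtypeProd (fun _ : Fin d => ℝ) (fun j : Fin d => j ≠ i)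
    with he'
  set π₁ := Measure.pi (fun j : {j : Fin d // j ≠ i} => μ 0 j.1) with hπ₁
  set π₂ := Measure.pi (fun j : {j : Fin d // ¬ j ≠ i} => μ 0 j.1) with hπ₂
  set α : ({j : Fin d // ¬ j ≠ i} → ℝ) → ℝ := fun v => φ (v ⟨i, not_not_intro rfl⟩) with hα
  have hαm : Measurable α := hφm.comp (measurable_pi_apply _)
  have hGm : Measurable (fun w : (({j : Fin d // j ≠ i} → ℝ) × ({j : Fin d // ¬ j ≠ i} → ℝ)) =>
      (α w.2, ψ w.1)) := (hαm.comp measurable_snd).prodMk (hψm.comp measurable_fst)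
  have h1 : (fun s : Fin d → ℝ => (φ (s i), ψ (fun j : {j : Fin d // j ≠ i} => s j.1)))
      = (fun w : (({j : Fin d // j ≠ i} → ℝ) × ({j : Fin d // ¬ j ≠ i} → ℝ)) =>
          (α w.2, ψ w.1)) ∘ e' := rfl
  have h2 : (fun s : Fin d → ℝ => φ (s i)) = α ∘ (Prod.snd ∘ e') := rfl
  have h3 : (fun s : Fin d → ℝ => ψ (fun j : {j : Fin d // j ≠ i} => s j.1))
      = ψ ∘ (Prod.fst ∘ e') := rfl
  have hswap : (fun w : (({j : Fin d // j ≠ i} → ℝ) × ({j : Fin d // ¬ j ≠ i} → ℝ)) =>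
      (α w.2, ψ w.1)) = (Prod.map α ψ) ∘ Prod.swap := rfl
  rw [h1, h2, h3,
    ← Measure.map_map hGm e'.measurable,
    ← Measure.map_map hαm (measurable_snd.comp e'.measurable),
    ← Measure.map_map measurable_snd e'.measurable,
    ← Measure.map_map hψm (measurable_fst.comp e'.measurable),
    ← Measure.map_map measurable_fst e'.measurable,
    hmp.map_eq, hswap,
    ← Measure.map_map (hαm.prodMap hψm) measurable_swap,
    Measure.prod_swap,
    ← Measure.map_prod_map _ _ hαm hψm,
    Measure.map_snd_prod, Measure.map_fst_prod]
  simp [measure_univ]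
end

section
/- Let 𝒮 = I₁ × ⋯ × I_d ⊆ ℝᵈ be a product of nonempty open intervals and let f : 𝒮 → ℝᵈ be a C² diffeomorphism onto its image whose Jacobian Df(s) is lower triangular and invertible at every s. For e = 0, 1, 2 let μᵉ = μ₁ᵉ ⊗ ⋯ ⊗ μ_dᵉ be product probability measures whose coordinates have strictly positive C¹ densities p_jᵉ on I_j, let qᵉ(x) := (∏_j p_jᵉ((f⁻¹(x))_j)) · |det D(f⁻¹)(x)| denote the density of f_*μᵉ, and set Δ(0,e,x) := ∇(log q⁰(x) − log qᵉ(x)). Then for every i ∈ {1,…,d} and every s ∈ 𝒮, Δ(0,e,f(s))ᵢ = Σ_{j=i}^{d} ∂_{xᵢ}(f⁻¹)_j(f(s)) · (d/ds_j)(log p_j⁰ − log p_jᵉ)(s_j). -/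
open MeasureTheory

private lemma matOf_eq_toMatrix' {d : ℕ} (L : (Fin d → ℝ) →L[ℝ] (Fin d → ℝ)) :
    (Matrix.of fun i j : Fin d => L (Pi.single j 1) i) =
      LinearMap.toMatrix' (L : (Fin d → ℝ) →ₗ[ℝ] (Fin d → ℝ)) := by
  ext i j
  rw [Matrix.of_apply, LinearMap.toMatrix'_apply]
  have hs : (fun j' => if j' = j then (1 : ℝ) else 0) = Pi.single j 1 := by
    funext k
    simp [Pi.single_apply]
  rfl

private lemma fderiv_real_apply (h : ℝ → ℝ) (t a : ℝ) :
    fderiv ℝ h t a = a * deriv h t := by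
  calc fderiv ℝ h t a = fderiv ℝ h t (a • (1 : ℝ)) := by norm_num
    _ = a • fderiv ℝ h t 1 := (fderiv ℝ h t).map_smul a 1
    _ = a * deriv h t := by rw [fderiv_apply_one_eq_deriv]; rfl

/-- Componentwise expansion of the score difference: for a triangular
C² diffeomorphic mixing `f` with product source densities, the `i`-th component of the
score difference satisfies
`Δ(0,e,f(s))ᵢ = ∑_{j ≥ i} ∂_{xᵢ}(f⁻¹)_j(f(s)) · (log p_j⁰ − log p_jᵉ)'(s_j)`. -/
theorem score_difference_componentwise_expansion
    (d : ℕ)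
    (I : Fin d → Set ℝ)
    (hIopen : ∀ j, IsOpen (I j)) (hIne : ∀ j, (I j).Nonempty)
    (hIinterval : ∀ j, (I j).OrdConnected)
    (S : Set (Fin d → ℝ)) (hS : S = Set.pi Set.univ I)
    (f g : (Fin d → ℝ) → (Fin d → ℝ))
    (hfC2 : ContDiffOn ℝ 2 f S)
    (hgC2 : ContDiffOn ℝ 2 g (f '' S))
    (himage_open : IsOpen (f '' S))
    (hgf : ∀ s ∈ S, g (f s) = s)
    (hfg : ∀ x ∈ f '' S, f (g x) = x)
    (htri : ∀ s ∈ S, ∀ i j : Fin d, i < j → fderiv ℝ f s (Pi.single j 1) i = 0)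
    (hdiag : ∀ s ∈ S, ∀ j : Fin d, fderiv ℝ f s (Pi.single j 1) j ≠ 0)
    (p : Fin d → Fin 3 → ℝ → ℝ)
    (hpC1 : ∀ j e, ContDiffOn ℝ 1 (p j e) (I j))
    (hppos : ∀ j e, ∀ x ∈ I j, 0 < p j e x)
    (μ : Fin 3 → Fin d → Measure ℝ)
    (hprob : ∀ e j, IsProbabilityMeasure (μ e j))
    (hdens : ∀ e j, μ e j =
      volume.withDensity fun x => ENNReal.ofReal ((I j).indicator (p j e) x))
    (q : Fin 3 → (Fin d → ℝ) → ℝ)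
    (hq : ∀ e x, q e x = (∏ j, p j e (g x j)) *
      |(Matrix.of fun i j : Fin d => fderiv ℝ g x (Pi.single j 1) i).det|)
    (Δ : Fin 3 → (Fin d → ℝ) → Fin d → ℝ)
    (hΔ : ∀ e x i, Δ e x i =
      fderiv ℝ (fun y => Real.log (q 0 y) - Real.log (q e y)) x (Pi.single i 1)) :
    ∀ e : Fin 3, ∀ i : Fin d, ∀ s ∈ S,
      Δ e (f s) i = ∑ j ∈ Finset.Ici i,
        fderiv ℝ g (f s) (Pi.single i 1) j *
          deriv (fun t => Real.log (p j 0 t) - Real.log (p j e t)) (s j) := by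
  intro e i s hs
  classical
  have hSopen : IsOpen S := by
    rw [hS]; exact isOpen_set_pi Set.finite_univ fun j _ => hIopen j
  have hx : f s ∈ f '' S := ⟨s, hs, rfl⟩
  have hgmem : ∀ y ∈ f '' S, g y ∈ S := by
    rintro y ⟨t, ht, rfl⟩; rw [hgf t ht]; exact ht
  have hgI : ∀ y ∈ f '' S, ∀ j, g y j ∈ I j := by
    intro y hy j
    have hmem := hgmem y hy
    rw [hS] at hmem
    exact hmem j (Set.mem_univ j)
  have hsI : ∀ j, s j ∈ I j := by
    intro j
    have hmem := hs
    rw [hS] at hmem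
    exact hmem j (Set.mem_univ j)
  have hfdiff : ∀ t ∈ S, DifferentiableAt ℝ f t := fun t ht =>
    (hfC2.contDiffAt (hSopen.mem_nhds ht)).differentiableAt (by norm_num)
  have hgdiff : ∀ y ∈ f '' S, DifferentiableAt ℝ g y := fun y hy =>
    (hgC2.contDiffAt (himage_open.mem_nhds hy)).differentiableAt (by norm_num)
  set N : (Fin d → ℝ) → Matrix (Fin d) (Fin d) ℝ :=
    fun y => LinearMap.toMatrix'
      ((fderiv ℝ g y : (Fin d → ℝ) →L[ℝ] (Fin d → ℝ)) : (Fin d → ℝ) →ₗ[ℝ] (Fin d → ℝ)) with hN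
  set M : (Fin d → ℝ) → Matrix (Fin d) (Fin d) ℝ :=
    fun t => LinearMap.toMatrix'
      ((fderiv ℝ f t : (Fin d → ℝ) →L[ℝ] (Fin d → ℝ)) : (Fin d → ℝ) →ₗ[ℝ] (Fin d → ℝ)) with hM
  have hMN : ∀ y ∈ f '' S, M (g y) * N y = 1 := by
    intro y hy
    have hcomp : fderiv ℝ (f ∘ g) y = (fderiv ℝ f (g y)).comp (fderiv ℝ g y) :=
      fderiv_comp y (hfdiff _ (hgmem y hy)) (hgdiff y hy)
    have hid : fderiv ℝ (f ∘ g) y = ContinuousLinearMap.id ℝ (Fin d → ℝ) := by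
      have hev : (f ∘ g) =ᶠ[nhds y] id :=
        Filter.eventuallyEq_of_mem (himage_open.mem_nhds hy) fun z hz => hfg z hz
      rw [hev.fderiv_eq, fderiv_id]
    have := hcomp.symm.trans hid
    calc M (g y) * N y
        = LinearMap.toMatrix' (((fderiv ℝ f (g y)).comp (fderiv ℝ g y) :
            (Fin d → ℝ) →L[ℝ] (Fin d → ℝ)) : (Fin d → ℝ) →ₗ[ℝ] (Fin d → ℝ)) := by
          rw [ContinuousLinearMap.toLinearMap_comp, LinearMap.toMatrix'_comp]
      _ = 1 := by rw [this]; simp [LinearMap.toMatrix'_id]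
  have hNM : N (f s) * M s = 1 := by
    have hcomp : fderiv ℝ (g ∘ f) s = (fderiv ℝ g (f s)).comp (fderiv ℝ f s) := by
      have h1 : DifferentiableAt ℝ g (f s) := hgdiff _ hx
      exact fderiv_comp s h1 (hfdiff s hs)
    have hid : fderiv ℝ (g ∘ f) s = ContinuousLinearMap.id ℝ (Fin d → ℝ) := by
      have hev : (g ∘ f) =ᶠ[nhds s] id :=
        Filter.eventuallyEq_of_mem (hSopen.mem_nhds hs) fun z hz => hgf z hz
      rw [hev.fderiv_eq, fderiv_id]
    have := hcomp.symm.trans hid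
    calc N (f s) * M s
        = LinearMap.toMatrix' (((fderiv ℝ g (f s)).comp (fderiv ℝ f s) :
            (Fin d → ℝ) →L[ℝ] (Fin d → ℝ)) : (Fin d → ℝ) →ₗ[ℝ] (Fin d → ℝ)) := by
          rw [ContinuousLinearMap.toLinearMap_comp, LinearMap.toMatrix'_comp]
      _ = 1 := by rw [this]; simp [LinearMap.toMatrix'_id]
  have hMs : M s * N (f s) = 1 := by
    have := hMN (f s) hx
    rwa [hgf s hs] at this
  have hNentry : ∀ y (a b : Fin d), N y a b = fderiv ℝ g y (Pi.single b 1) a := by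
    intro y a b
    simp only [hN]
    rw [← matOf_eq_toMatrix' (fderiv ℝ g y)]
    rfl
  have hMentry : ∀ t (a b : Fin d), M t a b = fderiv ℝ f t (Pi.single b 1) a := by
    intro t a b
    simp only [hM]
    rw [← matOf_eq_toMatrix' (fderiv ℝ f t)]
    rfl
  -- triangularity of Dg at f s
  have htriG : ∀ j : Fin d, j < i → fderiv ℝ g (f s) (Pi.single i 1) j = 0 := by
    intro j hji
    have hMtri : (M s).BlockTriangular (fun k : Fin d => OrderDual.toDual k) := by
      intro a b hab
      rw [hMentry]
      exact htri s hs a b (OrderDual.toDual_lt_toDual.mp hab)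
    have hinv : Invertible (M s) := invertibleOfRightInverse _ _ hMs
    have hNeq : (M s)⁻¹ = N (f s) := Matrix.inv_eq_right_inv hMs
    have hNtri : (N (f s)).BlockTriangular (fun k : Fin d => OrderDual.toDual k) := by
      rw [← hNeq]
      exact Matrix.blockTriangular_inv_of_blockTriangular hMtri
    have := hNtri (i := j) (j := i) (OrderDual.toDual_lt_toDual.mpr hji)
    rwa [hNentry] at this
  -- determinant of Dg is nonzero on the image
  have hdet : ∀ y ∈ f '' S, (N y).det ≠ 0 := by
    intro y hy
    have h1 : (M (g y)).det * (N y).det = 1 := by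
      rw [← Matrix.det_mul, hMN y hy, Matrix.det_one]
    intro h0
    rw [h0, mul_zero] at h1
    exact zero_ne_one h1
  -- the log-density difference equals the sum of coordinatewise log-density differences
  set u : (Fin d → ℝ) → ℝ :=
    fun y => ∑ j, (Real.log (p j 0 (g y j)) - Real.log (p j e (g y j))) with hu
  have heq : ∀ y ∈ f '' S, Real.log (q 0 y) - Real.log (q e y) = u y := by
    intro y hy
    have hdetof : (Matrix.of fun a b : Fin d => fderiv ℝ g y (Pi.single b 1) a).det = (N y).det := by
      rw [matOf_eq_toMatrix' (fderiv ℝ g y)]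
    have hdet' : |(Matrix.of fun a b : Fin d => fderiv ℝ g y (Pi.single b 1) a).det| ≠ 0 := by
      rw [hdetof]
      exact abs_ne_zero.mpr (hdet y hy)
    have key : ∀ e' : Fin 3, Real.log (q e' y) =
        (∑ j, Real.log (p j e' (g y j))) +
          Real.log |(Matrix.of fun a b : Fin d => fderiv ℝ g y (Pi.single b 1) a).det| := by
      intro e'
      have hprodpos : (0 : ℝ) < ∏ j, p j e' (g y j) :=
        Finset.prod_pos fun j _ => hppos j e' _ (hgI y hy j)
      rw [hq, Real.log_mul hprodpos.ne' hdet',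
        Real.log_prod fun j _ => (hppos j e' _ (hgI y hy j)).ne']
    rw [key 0, key e]
    simp only [hu]
    rw [Finset.sum_sub_distrib]
    ring
  -- differentiate
  have hfder : fderiv ℝ (fun y => Real.log (q 0 y) - Real.log (q e y)) (f s) =
      fderiv ℝ u (f s) :=
    Filter.EventuallyEq.fderiv_eq
      (Filter.eventuallyEq_of_mem (himage_open.mem_nhds hx) heq)
  have hpdiff : ∀ (j : Fin d) (e' : Fin 3), DifferentiableAt ℝ (p j e') (s j) := fun j e' =>
    ((hpC1 j e').contDiffAt ((hIopen j).mem_nhds (hsI j))).differentiableAt one_ne_zero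
  have hhdiff : ∀ j : Fin d,
      DifferentiableAt ℝ (fun t => Real.log (p j 0 t) - Real.log (p j e t)) (s j) := fun j =>
    ((hpdiff j 0).log (hppos j 0 _ (hsI j)).ne').sub
      ((hpdiff j e).log (hppos j e _ (hsI j)).ne')
  have hφdiff : ∀ j : Fin d, DifferentiableAt ℝ (fun y => g y j) (f s) := fun j =>
    differentiableAt_pi.mp (hgdiff _ hx) j
  have hgfs : ∀ j : Fin d, g (f s) j = s j := fun j => by rw [hgf s hs]
  have htermdiff : ∀ j : Fin d, DifferentiableAt ℝ
      (fun y => Real.log (p j 0 (g y j)) - Real.log (p j e (g y j))) (f s) := by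
    intro j
    have h1 : DifferentiableAt ℝ (fun t => Real.log (p j 0 t) - Real.log (p j e t))
        ((fun y => g y j) (f s)) := by
      simpa [hgfs j] using hhdiff j
    exact h1.comp (f s) (hφdiff j)
  have hφfder : ∀ j : Fin d,
      fderiv ℝ (fun y => g y j) (f s) (Pi.single i 1) =
        fderiv ℝ g (f s) (Pi.single i 1) j := by
    intro j
    have hc : fderiv ℝ ((ContinuousLinearMap.proj j :
        (Fin d → ℝ) →L[ℝ] ℝ) ∘ g) (f s) =
        ((ContinuousLinearMap.proj j : (Fin d → ℝ) →L[ℝ] ℝ)).comp (fderiv ℝ g (f s)) := by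
      rw [fderiv_comp (f s) (ContinuousLinearMap.proj j).differentiableAt (hgdiff _ hx),
        ContinuousLinearMap.fderiv]
    have : fderiv ℝ (fun y => g y j) (f s) =
        ((ContinuousLinearMap.proj j : (Fin d → ℝ) →L[ℝ] ℝ)).comp (fderiv ℝ g (f s)) := hc
    rw [this]
    rfl
  have htermfder : ∀ j : Fin d,
      fderiv ℝ (fun y => Real.log (p j 0 (g y j)) - Real.log (p j e (g y j))) (f s)
        (Pi.single i 1) =
      fderiv ℝ g (f s) (Pi.single i 1) j *
        deriv (fun t => Real.log (p j 0 t) - Real.log (p j e t)) (s j) := by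
    intro j
    have h1 : DifferentiableAt ℝ (fun t => Real.log (p j 0 t) - Real.log (p j e t))
        ((fun y => g y j) (f s)) := by
      simpa [hgfs j] using hhdiff j
    have hc : fderiv ℝ ((fun t => Real.log (p j 0 t) - Real.log (p j e t)) ∘
        (fun y => g y j)) (f s) =
        (fderiv ℝ (fun t => Real.log (p j 0 t) - Real.log (p j e t))
          ((fun y => g y j) (f s))).comp (fderiv ℝ (fun y => g y j) (f s)) :=
      fderiv_comp (f s) h1 (hφdiff j)
    have hc' : fderiv ℝ (fun y => Real.log (p j 0 (g y j)) - Real.log (p j e (g y j))) (f s)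
        (Pi.single i 1) =
        fderiv ℝ (fun t => Real.log (p j 0 t) - Real.log (p j e t)) (g (f s) j)
          (fderiv ℝ (fun y => g y j) (f s) (Pi.single i 1)) := by
      have := congrFun (congrArg (fun (L : (Fin d → ℝ) →L[ℝ] ℝ) => (L : (Fin d → ℝ) → ℝ)) hc)
        (Pi.single i 1)
      exact this
    rw [hc', hgfs j, fderiv_real_apply, hφfder j]
  -- put everything together
  rw [hΔ, hfder, hu]
  have hsum : fderiv ℝ (fun y => ∑ j,
      (Real.log (p j 0 (g y j)) - Real.log (p j e (g y j)))) (f s) =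
      ∑ j, fderiv ℝ (fun y => Real.log (p j 0 (g y j)) - Real.log (p j e (g y j))) (f s) :=
    fderiv_fun_sum fun j _ => htermdiff j
  rw [hsum]
  rw [ContinuousLinearMap.sum_apply]
  have hval : ∀ j : Fin d,
      fderiv ℝ (fun y => Real.log (p j 0 (g y j)) - Real.log (p j e (g y j))) (f s)
        (Pi.single i 1) =
      fderiv ℝ g (f s) (Pi.single i 1) j *
        deriv (fun t => Real.log (p j 0 t) - Real.log (p j e t)) (s j) := htermfder
  rw [Finset.sum_congr rfl fun j _ => hval j]
  refine (Finset.sum_subset (Finset.subset_univ _) ?_).symm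
  intro j _ hj
  have hji : j < i := by
    rw [Finset.mem_Ici] at hj
    exact lt_of_not_ge hj
  rw [htriG j hji, zero_mul]
end

section
/- Consider the bivariate linear Gaussian model X₁ = S₁, X₂ = a S₁ + S₂ with a ∈ ℝ, i.e. X = f(S) with f(s₁, s₂) = (s₁, a s₁ + s₂). For e = 0, 1, 2 let the sources Sᵢᵉ be independent centered Gaussians with variances (σᵢᵉ)² > 0, let qᵉ denote the (Gaussian) density of X in environment e, set Δᵉ(x) := ∇(log q⁰(x) − log qᵉ(x)), and write αᵢᵉ := 1/(σᵢᵉ)² − 1/(σᵢ⁰)². Then, writing s₁ = x₁ and s₂ = x₂ − a x₁: (a) Δᵉ(f(s))₁ = α₁ᵉ s₁ − a α₂ᵉ s₂ and Δᵉ(f(s))₂ = α₂ᵉ s₂ for all s ∈ ℝ²; (b) the collinearity determinant H(s) := Δ¹(f(s))₁ · ∂_{s₂}[Δ²(f(·))₁](s) − Δ²(f(s))₁ · ∂_{s₂}[Δ¹(f(·))₁](s) equals a (α₂¹ α₁² − α₂² α₁¹) s₁ for all s ∈ ℝ²; (c) consequently, if α₁² ≠ 0, α₂² ≠ 0 and α₂¹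 α₁² − α₂² α₁¹ ≠ 0, then H vanishes Lebesgue-almost everywhere on ℝ² if and only if a = 0, i.e. the sufficient-variability condition fails exactly for a = 0. -/
open MeasureTheory

lemma quad_fderiv_apply (c0 c1 c2 a : ℝ) (x : ℝ × ℝ) (u v : ℝ) :
    fderiv ℝ (fun y : ℝ × ℝ => c0 + c1 * y.1 ^ 2 + c2 * (y.2 - a * y.1) ^ 2) x (u, v)
      = c1 * (2 * x.1) * u + c2 * (2 * (x.2 - a * x.1)) * (v - a * u) := by
  have h1 : HasFDerivAt (fun y : ℝ × ℝ => y.1) (ContinuousLinearMap.fst ℝ ℝ ℝ) x := hasFDerivAt_fst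
  have h2 : HasFDerivAt (fun y : ℝ × ℝ => y.2) (ContinuousLinearMap.snd ℝ ℝ ℝ) x := hasFDerivAt_snd
  have h3 : HasFDerivAt (fun y : ℝ × ℝ => y.2 - a * y.1)
      (ContinuousLinearMap.snd ℝ ℝ ℝ - a • ContinuousLinearMap.fst ℝ ℝ ℝ) x :=
    h2.sub (h1.const_mul a)
  have heq : (fun y : ℝ × ℝ => c0 + c1 * y.1 ^ 2 + c2 * (y.2 - a * y.1) ^ 2)
      = (fun y : ℝ × ℝ => c0 + c1 * (y.1 * y.1) + c2 * ((y.2 - a * y.1) * (y.2 - a * y.1))) := by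
    funext y; ring
  rw [heq]
  have h : HasFDerivAt (fun y : ℝ × ℝ => c0 + c1 * (y.1 * y.1) + c2 * ((y.2 - a * y.1) * (y.2 - a * y.1))) _ x :=
    ((((h1.mul h1).const_mul c1).const_add c0).add ((h3.mul h3).const_mul c2))
  rw [h.fderiv]
  simp
  ring

lemma ae_fst_zero_false (c : ℝ) (hc : c ≠ 0) (h : ∀ᵐ s : ℝ × ℝ ∂volume, c * s.1 = 0) : False := by
  have h2 : ∀ᵐ s : ℝ × ℝ ∂volume, s.1 = 0 := by
    filter_upwards [h] with s hs
    exact (mul_eq_zero.mp hs).resolve_left hc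
  have hn : volume {s : ℝ × ℝ | ¬ s.1 = 0} = 0 := ae_iff.mp h2
  have hz : volume {s : ℝ × ℝ | s.1 = 0} = 0 := by
    have hset : {s : ℝ × ℝ | s.1 = 0} = ({0} : Set ℝ) ×ˢ (Set.univ : Set ℝ) := by
      ext s; constructor
      · intro hs; exact ⟨hs, trivial⟩
      · intro hs; exact hs.1
    rw [hset, Measure.volume_eq_prod, Measure.prod_prod]
    simp
  have huniv : (volume : Measure (ℝ × ℝ)) Set.univ ≤ 0 := by
    have hsub : (Set.univ : Set (ℝ × ℝ)) ⊆ {s : ℝ × ℝ | ¬ s.1 = 0} ∪ {s : ℝ × ℝ | s.1 = 0} := by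
      intro s _; by_cases hs : s.1 = 0 <;> simp [hs]
    calc (volume : Measure (ℝ × ℝ)) Set.univ ≤ _ := measure_mono hsub
      _ ≤ _ := measure_union_le _ _
      _ = 0 := by rw [hn, hz]; simp
  have hfin : (volume : Measure (ℝ × ℝ)) Set.univ = ⊤ := by
    rw [← Set.univ_prod_univ, Measure.volume_eq_prod, Measure.prod_prod]
    simp
  rw [hfin] at huniv
  simp at huniv

/-- Bivariate linear Gaussian model `X₁ = S₁`, `X₂ = aS₁ + S₂` with
centered Gaussian sources of variances `(σᵢᵉ)²` in environments `e = 0,1,2`: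
(a) the score differences `Δᵉ ∘ f` are linear in the sources with coefficients
`αᵢᵉ = 1/(σᵢᵉ)² − 1/(σᵢ⁰)²`; (b) the collinearity determinant equals
`a(α₂¹α₁² − α₂²α₁¹)s₁`; (c) under the stated nondegeneracy it vanishes a.e. iff `a = 0`.
(Source/environment indices are shifted down by one: `σ 0 e` is `σ₁ᵉ`, etc.) -/
theorem bivariate_linear_gaussian_sufficient_variability
    (a : ℝ) (σ : Fin 2 → Fin 3 → ℝ) (hσ : ∀ i e, 0 < σ i e)
    (gauss : ℝ → ℝ → ℝ)
    (hgauss : ∀ c t, gauss c t =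
      (c * Real.sqrt (2 * Real.pi))⁻¹ * Real.exp (-t ^ 2 / (2 * c ^ 2)))
    (f : ℝ × ℝ → ℝ × ℝ) (hf : ∀ s : ℝ × ℝ, f s = (s.1, a * s.1 + s.2))
    (q : Fin 3 → ℝ × ℝ → ℝ)
    (hq : ∀ e x, q e x = gauss (σ 0 e) x.1 * gauss (σ 1 e) (x.2 - a * x.1))
    (Δ : Fin 3 → ℝ × ℝ → ℝ × ℝ)
    (hΔ : ∀ e x, Δ e x =
      (fderiv ℝ (fun y => Real.log (q 0 y) - Real.log (q e y)) x ((1 : ℝ), (0 : ℝ)),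
       fderiv ℝ (fun y => Real.log (q 0 y) - Real.log (q e y)) x ((0 : ℝ), (1 : ℝ))))
    (α : Fin 2 → Fin 3 → ℝ)
    (hα : ∀ i e, α i e = 1 / (σ i e) ^ 2 - 1 / (σ i 0) ^ 2)
    (H : ℝ × ℝ → ℝ)
    (hH : ∀ s : ℝ × ℝ, H s =
      (Δ 1 (f s)).1 * deriv (fun t => (Δ 2 (f (s.1, t))).1) s.2
      - (Δ 2 (f s)).1 * deriv (fun t => (Δ 1 (f (s.1, t))).1) s.2) :
    (∀ e : Fin 3, ∀ s : ℝ × ℝ,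
        (Δ e (f s)).1 = α 0 e * s.1 - a * (α 1 e * s.2) ∧
        (Δ e (f s)).2 = α 1 e * s.2)
    ∧ (∀ s : ℝ × ℝ, H s = a * (α 1 1 * α 0 2 - α 1 2 * α 0 1) * s.1)
    ∧ (α 0 2 ≠ 0 → α 1 2 ≠ 0 → α 1 1 * α 0 2 - α 1 2 * α 0 1 ≠ 0 →
        ((∀ᵐ s : ℝ × ℝ ∂volume, H s = 0) ↔ a = 0)) := by
  -- positivity of gauss and its log
  have hgpos : ∀ c t, 0 < c → 0 < gauss c t := by
    intro c t hc
    rw [hgauss]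
    have : 0 < Real.sqrt (2 * Real.pi) := Real.sqrt_pos.mpr (by positivity)
    positivity
  have hlog : ∀ c t, 0 < c → Real.log (gauss c t)
      = Real.log (c * Real.sqrt (2 * Real.pi))⁻¹ + (-t ^ 2 / (2 * c ^ 2)) := by
    intro c t hc
    have hs : (0:ℝ) < Real.sqrt (2 * Real.pi) := Real.sqrt_pos.mpr (by positivity)
    rw [hgauss, Real.log_mul (by positivity) (Real.exp_ne_zero _), Real.log_exp]
  -- the log-density difference is an explicit quadratic
  set C : Fin 3 → ℝ := fun e =>
    Real.log (σ 0 0 * Real.sqrt (2 * Real.pi))⁻¹ + Real.log (σ 1 0 * Real.sqrt (2 * Real.pi))⁻¹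
    - Real.log (σ 0 e * Real.sqrt (2 * Real.pi))⁻¹ - Real.log (σ 1 e * Real.sqrt (2 * Real.pi))⁻¹
    with hC
  have hquad : ∀ e : Fin 3, (fun y : ℝ × ℝ => Real.log (q 0 y) - Real.log (q e y))
      = (fun y : ℝ × ℝ => C e + (α 0 e / 2) * y.1 ^ 2 + (α 1 e / 2) * (y.2 - a * y.1) ^ 2) := by
    intro e
    funext y
    rw [hq, hq,
      Real.log_mul (ne_of_gt (hgpos _ _ (hσ 0 0))) (ne_of_gt (hgpos _ _ (hσ 1 0))),
      Real.log_mul (ne_of_gt (hgpos _ _ (hσ 0 e))) (ne_of_gt (hgpos _ _ (hσ 1 e))),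
      hlog _ _ (hσ 0 0), hlog _ _ (hσ 1 0), hlog _ _ (hσ 0 e), hlog _ _ (hσ 1 e),
      hα, hα, hC]
    have h00 := (hσ 0 0).ne'
    have h10 := (hσ 1 0).ne'
    have h0e := (hσ 0 e).ne'
    have h1e := (hσ 1 e).ne'
    field_simp
    ring
  -- part (a) for arbitrary x, then at f s
  have hΔ1 : ∀ e : Fin 3, ∀ x : ℝ × ℝ,
      (Δ e x).1 = α 0 e * x.1 - a * (α 1 e * (x.2 - a * x.1)) := by
    intro e x
    rw [hΔ]
    show fderiv ℝ (fun y => Real.log (q 0 y) - Real.log (q e y)) x ((1:ℝ), (0:ℝ)) = _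
    rw [hquad e, quad_fderiv_apply]
    ring
  have hΔ2 : ∀ e : Fin 3, ∀ x : ℝ × ℝ,
      (Δ e x).2 = α 1 e * (x.2 - a * x.1) := by
    intro e x
    rw [hΔ]
    show fderiv ℝ (fun y => Real.log (q 0 y) - Real.log (q e y)) x ((0:ℝ), (1:ℝ)) = _
    rw [hquad e, quad_fderiv_apply]
    ring
  have parta : ∀ e : Fin 3, ∀ s : ℝ × ℝ,
      (Δ e (f s)).1 = α 0 e * s.1 - a * (α 1 e * s.2) ∧
      (Δ e (f s)).2 = α 1 e * s.2 := by
    intro e s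
    rw [hΔ1, hΔ2, hf]
    constructor <;> (simp; try ring)
  -- part (b)
  have hderiv : ∀ e : Fin 3, ∀ s : ℝ × ℝ,
      deriv (fun t => (Δ e (f (s.1, t))).1) s.2 = -(a * α 1 e) := by
    intro e s
    have heq : (fun t => (Δ e (f (s.1, t))).1)
        = (fun t => α 0 e * s.1 - a * (α 1 e * t)) := by
      funext t
      exact (parta e (s.1, t)).1
    rw [heq]
    have h : HasDerivAt (fun t : ℝ => α 0 e * s.1 - a * (α 1 e * t)) (-(a * (α 1 e * 1))) s.2 :=
      (((hasDerivAt_id s.2).const_mul (α 1 e)).const_mul a).const_sub _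
    rw [h.deriv]; ring
  have partb : ∀ s : ℝ × ℝ, H s = a * (α 1 1 * α 0 2 - α 1 2 * α 0 1) * s.1 := by
    intro s
    rw [hH, hderiv, hderiv, (parta 1 s).1, (parta 2 s).1]
    ring
  refine ⟨parta, partb, ?_⟩
  -- part (c)
  intro _ _ hdet
  constructor
  · intro hae
    by_contra ha
    have hc : a * (α 1 1 * α 0 2 - α 1 2 * α 0 1) ≠ 0 := mul_ne_zero ha hdet
    refine ae_fst_zero_false _ hc ?_
    filter_upwards [hae] with s hs
    rw [partb s] at hs
    exact hs
  · intro ha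
    refine Filter.Eventually.of_forall fun s => ?_
    rw [partb s, ha]
    ring
end

section
/- Let U ⊆ ℝᵈ be a nonempty open set, let u, v : U → ℝ be continuously differentiable with v(s) ≠ 0 for all s ∈ U, and fix j ∈ {1,…,d}. Suppose the set A := {s ∈ U : v(s) ∂u/∂s_j(s) − u(s) ∂v/∂s_j(s) ≠ 0} has positive Lebesgue measure. Then ∂/∂s_j (u/v)(s) ≠ 0 for every s ∈ A, and consequently the ratio u/v is not equal Lebesgue-almost everywhere on U to any measurable function of the coordinates (s_k)_{k ≠ j}. -/
open MeasureTheory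

/-- If the Wronskian-type determinant `v ∂_j u − u ∂_j v` is nonzero on
a set `A ⊆ U` of positive Lebesgue measure (with `v` nonvanishing on the open set `U`),
then `∂_j (u/v)` is nonzero on `A`, and the ratio `u/v` is not Lebesgue-a.e. on `U` equal
to any measurable function of the coordinates `(s_k)_{k ≠ j}`. -/
theorem ratio_depends_on_coordinate_of_wronskian_pos_measure
    (d : ℕ) (U : Set (Fin d → ℝ)) (hUopen : IsOpen U) (hUne : U.Nonempty)
    (u v : (Fin d → ℝ) → ℝ)
    (huC1 : ContDiffOn ℝ 1 u U) (hvC1 : ContDiffOn ℝ 1 v U)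
    (hvne : ∀ s ∈ U, v s ≠ 0)
    (j : Fin d)
    (A : Set (Fin d → ℝ))
    (hA : A = {s ∈ U |
      v s * fderiv ℝ u s (Pi.single j 1) - u s * fderiv ℝ v s (Pi.single j 1) ≠ 0})
    (hpos : 0 < volume A) :
    (∀ s ∈ A, fderiv ℝ (fun t => u t / v t) s (Pi.single j 1) ≠ 0) ∧
    ¬ ∃ g : ({k : Fin d // k ≠ j} → ℝ) → ℝ, Measurable g ∧
        ∀ᵐ s ∂(volume.restrict U), u s / v s = g fun k => s k.1 := by
  subst hA
  set F : (Fin d → ℝ) → ℝ := fun t => u t / v t with hFdef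
  set e : Fin d → ℝ := Pi.single j 1 with he
  have hF : ContDiffOn ℝ 1 F U := huC1.div hvC1 hvne
  have hudiff : ∀ s ∈ U, DifferentiableAt ℝ u s := fun s hs =>
    (huC1.differentiableOn one_ne_zero).differentiableAt (hUopen.mem_nhds hs)
  have hvdiff : ∀ s ∈ U, DifferentiableAt ℝ v s := fun s hs =>
    (hvC1.differentiableOn one_ne_zero).differentiableAt (hUopen.mem_nhds hs)
  have hFdiff : ∀ s ∈ U, DifferentiableAt ℝ F s := fun s hs => by
    have : F = fun t => u t * (v t)⁻¹ := by
      funext t; simp [hFdef, div_eq_mul_inv]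
    rw [this]
    exact (hudiff s hs).mul ((hvdiff s hs).inv (hvne s hs))
  have hline : ∀ (s : Fin d → ℝ) (t : ℝ), HasDerivAt (fun τ : ℝ => s + τ • e) e t :=
    fun s t => by simpa using ((hasDerivAt_id t).smul_const e).const_add s
  have hcomp : ∀ (w : (Fin d → ℝ) → ℝ) (s : Fin d → ℝ) (t : ℝ),
      DifferentiableAt ℝ w (s + t • e) →
      HasDerivAt (fun τ : ℝ => w (s + τ • e)) (fderiv ℝ w (s + t • e) e) t := by
    intro w s t hw
    exact hw.hasFDerivAt.comp_hasDerivAt t (hline s t)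
  have h00 : ∀ s : Fin d → ℝ, s + (0:ℝ) • e = s := fun s => by simp
  have key : ∀ s ∈ U, fderiv ℝ F s e =
      (v s * fderiv ℝ u s e - u s * fderiv ℝ v s e) / (v s) ^ 2 := by
    intro s hs
    have hu' : HasDerivAt (fun τ : ℝ => u (s + τ • e)) (fderiv ℝ u s e) 0 := by
      have := hcomp u s 0 (by rw [h00 s]; exact hudiff s hs)
      rwa [h00 s] at this
    have hv' : HasDerivAt (fun τ : ℝ => v (s + τ • e)) (fderiv ℝ v s e) 0 := by
      have := hcomp v s 0 (by rw [h00 s]; exact hvdiff s hs)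
      rwa [h00 s] at this
    have hF' : HasDerivAt (fun τ : ℝ => F (s + τ • e)) (fderiv ℝ F s e) 0 := by
      have := hcomp F s 0 (by rw [h00 s]; exact hFdiff s hs)
      rwa [h00 s] at this
    have hvx : v (s + (0:ℝ) • e) ≠ 0 := by rw [h00 s]; exact hvne s hs
    have hdiv := hu'.div hv' hvx
    rw [h00 s] at hdiv
    have heq := hF'.unique hdiv
    rw [heq]; ring
  have part1 : ∀ s ∈ {s ∈ U |
      v s * fderiv ℝ u s (Pi.single j 1) - u s * fderiv ℝ v s (Pi.single j 1) ≠ 0},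
      fderiv ℝ (fun t => u t / v t) s (Pi.single j 1) ≠ 0 := by
    intro s hs
    obtain ⟨hsU, hnum⟩ := hs
    have := key s hsU
    rw [← he, ← hFdef]
    rw [this]
    exact div_ne_zero hnum (pow_ne_zero 2 (hvne s hsU))
  refine ⟨part1, ?_⟩
  rintro ⟨g, hg, hae⟩
  obtain ⟨s₀, hs₀⟩ : Set.Nonempty {s ∈ U |
      v s * fderiv ℝ u s (Pi.single j 1) - u s * fderiv ℝ v s (Pi.single j 1) ≠ 0} :=
    nonempty_of_measure_ne_zero hpos.ne'
  have hs₀U : s₀ ∈ U := hs₀.1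
  set c : ℝ := fderiv ℝ F s₀ e with hc_def
  have hc : c ≠ 0 := part1 s₀ hs₀
  have hcpos : 0 < |c| := abs_pos.mpr hc
  -- continuity of the directional derivative
  have hcont : ContinuousOn (fun s => fderiv ℝ F s e) U :=
    (hF.continuousOn_fderiv_of_isOpen hUopen le_rfl).clm_apply continuousOn_const
  have hca : ContinuousAt (fun s => fderiv ℝ F s e) s₀ :=
    hcont.continuousAt (hUopen.mem_nhds hs₀U)
  set ε : ℝ := |c| / 2 with hε_def
  have hε : 0 < ε := by positivity
  obtain ⟨r₀, hr₀, hball⟩ := Metric.continuousAt_iff.mp hca ε hε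
  obtain ⟨r₁, hr₁, hU1⟩ := Metric.isOpen_iff.mp hUopen s₀ hs₀U
  set r : ℝ := min r₀ r₁ with hr_def
  have hr : 0 < r := lt_min hr₀ hr₁
  set δ : ℝ := r / (2 * (‖e‖ + 1)) with hδ_def
  have hepos : (0:ℝ) < ‖e‖ + 1 := by positivity
  have hδ : 0 < δ := by positivity
  have hδe : δ * (‖e‖ + 1) = r / 2 := by
    rw [hδ_def]; field_simp
  have hδ_half : δ ≤ r / 2 := by
    nlinarith [norm_nonneg e]
  have hseg : ∀ s ∈ Metric.ball s₀ δ, ∀ t ∈ Set.Icc (0:ℝ) δ,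
      s + t • e ∈ Metric.ball s₀ r := by
    intro s hs t ht
    have h1 : dist (s + t • e) s = ‖t • e‖ := by
      simp [dist_eq_norm]
    have h2 : ‖t • e‖ ≤ δ * ‖e‖ := by
      rw [norm_smul, Real.norm_eq_abs, abs_of_nonneg ht.1]
      exact mul_le_mul_of_nonneg_right ht.2 (norm_nonneg e)
    have h3 : dist s s₀ < δ := hs
    have := dist_triangle (s + t • e) s s₀
    have : dist (s + t • e) s₀ < δ * ‖e‖ + δ := by
      rw [h1] at this; linarith
    have hlt : δ * ‖e‖ + δ = δ * (‖e‖ + 1) := by ring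
    rw [hlt, hδe] at this
    exact lt_of_lt_of_le this (by linarith)
  have hballU : Metric.ball s₀ r ⊆ U :=
    (Metric.ball_subset_ball (min_le_right r₀ r₁)).trans hU1
  -- the null sets
  have hUm := hUopen.measurableSet
  set N : Set (Fin d → ℝ) :=
    {s | ¬ (u s / v s = g fun k : {k : Fin d // k ≠ j} => s k.1)} ∩ U with hN_def
  have hN : volume N = 0 := by
    have h := hae
    rw [ae_iff] at h
    rw [Measure.restrict_apply' hUm] at h
    rw [hN_def]
    exact h
  set N2 : Set (Fin d → ℝ) := (fun s => s + δ • e) ⁻¹' N with hN2_def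
  have hN2 : volume N2 = 0 := by
    rw [hN2_def, measure_preimage_add_right]
    exact hN
  have hB : 0 < volume (Metric.ball s₀ δ) := Metric.measure_ball_pos _ _ hδ
  have hnotsub : ¬ (Metric.ball s₀ δ ⊆ N ∪ N2) := by
    intro h
    have hle : volume (Metric.ball s₀ δ) ≤ volume (N ∪ N2) := measure_mono h
    rw [measure_union_null hN hN2] at hle
    exact absurd (le_antisymm hle (zero_le)) hB.ne'
  obtain ⟨s, hsball, hsnot⟩ := Set.not_subset.mp hnotsub
  have hsU : s ∈ U := by
    refine hballU ?_
    exact Metric.ball_subset_ball (by linarith) hsball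
  have hs'ball : s + δ • e ∈ Metric.ball s₀ r :=
    hseg s hsball δ ⟨hδ.le, le_refl δ⟩
  have hs'U : s + δ • e ∈ U := hballU hs'ball
  have hsN : s ∉ N := fun h => hsnot (Or.inl h)
  have hs'N : s + δ • e ∉ N := fun h => hsnot (Or.inr h)
  have heq1 : u s / v s = g fun k : {k : Fin d // k ≠ j} => s k.1 := by
    by_contra h
    exact hsN ⟨h, hsU⟩
  have heq2 : u (s + δ • e) / v (s + δ • e) =
      g fun k : {k : Fin d // k ≠ j} => (s + δ • e) k.1 := by
    by_contra h
    exact hs'N ⟨h, hs'U⟩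
  have hπ : (fun k : {k : Fin d // k ≠ j} => (s + δ • e) k.1) =
      fun k : {k : Fin d // k ≠ j} => s k.1 := by
    funext k
    have : e k.1 = 0 := Pi.single_eq_of_ne k.2 1
    simp [this]
  have hFeq : F (s + δ • e) = F s := by
    rw [hFdef]
    simp only []
    rw [heq2, hπ, ← heq1]
  -- mean value estimate
  have hderivs : ∀ t ∈ Set.Icc (0:ℝ) δ,
      HasDerivAt (fun τ : ℝ => F (s + τ • e) - τ * c)
        (fderiv ℝ F (s + t • e) e - c) t := by
    intro t ht
    have hmem : s + t • e ∈ U := hballU (hseg s hsball t ht)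
    have h1 := hcomp F s t (hFdiff _ hmem)
    have h2 : HasDerivAt (fun τ : ℝ => τ * c) c t := by
      simpa using (hasDerivAt_id t).mul_const c
    exact h1.sub h2
  have hbound : ∀ t ∈ Set.Icc (0:ℝ) δ, ‖fderiv ℝ F (s + t • e) e - c‖ ≤ ε := by
    intro t ht
    have hmem : s + t • e ∈ Metric.ball s₀ r := hseg s hsball t ht
    have hd : dist (s + t • e) s₀ < r₀ := lt_of_lt_of_le hmem (min_le_left r₀ r₁)
    have := hball hd
    rw [Real.dist_eq] at this
    rw [Real.norm_eq_abs]
    exact le_of_lt this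
  have hMVT := (convex_Icc (0:ℝ) δ).norm_image_sub_le_of_norm_hasDerivWithin_le
    (fun t ht => (hderivs t ht).hasDerivWithinAt) hbound
    (Set.left_mem_Icc.mpr hδ.le) (Set.right_mem_Icc.mpr hδ.le)
  have h0s : s + (0:ℝ) • e = s := h00 s
  rw [h0s] at hMVT
  rw [hFeq] at hMVT
  have hsimp : F s - δ * c - (F s - 0 * c) = -(δ * c) := by ring
  rw [hsimp] at hMVT
  rw [norm_neg, Real.norm_eq_abs, Real.norm_eq_abs, abs_mul,
    abs_of_nonneg hδ.le, sub_zero, abs_of_nonneg hδ.le] at hMVT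
  rw [hε_def] at hMVT
  nlinarith
end
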